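/- If the transition kernel K is uniformly ergodic with (α, M), i.e., ‖K^j(x,·) − π‖_tv ≤ α^j M for all x and j, then for every x ∈ G and every family 𝒜 of Borel test sets, sup_{A∈𝒜} |n^{-1} Σ_{i=1}^n K^i(x,A) − π(A)| ≤ αM/(n(1−α)), and consequently the discrepancy of the Markov chain points and the push-back discrepancy of the driver sequence differ by at most αM/(n(1−α)): |D*_{𝒜,π}(P_n) − D*_{𝒜,φ}(U_n)| ≤ αM/(n(1−α)). -/

import Mathlib

open MeasureTheory Classical

/-- The unit cube `[0,1]^s`. -/
abbrev Cube (s : ℕ) := Fin s → unitInterval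

/-- Iterates of an update function on finite driver tuples:
`iterFin φ i x u = φ_i(x; u_1, …, u_i)`. -/
def iterFin {G : Type*} {s : ℕ} (φ : G → Cube s → G) :
    (i : ℕ) → G → (Fin i → Cube s) → G
  | 0, x, _ => x
  | n + 1, x, u => φ (iterFin φ n x (fun k => u k.castSucc)) (u (Fin.last n))

/-- The iterated transition kernel: `Kiter K 0 x = δ_x` and
`K^{i+1}(x,A) = ∫_G K(y,A) K^i(x,dy)`. -/
noncomputable def Kiter {G : Type*} [MeasurableSpace G] (K : G → Measure G) :
    ℕ → G → Measure G
  | 0, x => Measure.dirac x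
  | n + 1, x => (Kiter K n x).bind K

/-!
Realising `K(y, ·)` as the law of `φ(y, U)` with `U` uniform on the cube shows, by induction on
`i`, that `K^i(x, ·)` is the law of `φ_i(x; U_1, …, U_i)` for independent uniform `U_j`; so the
push-back discrepancy compares the empirical frequencies with the averages `n⁻¹ Σ K^i(x, A)`.
Uniform ergodicity puts these averages within `n⁻¹ Σ_{i ≥ 1} α^i M ≤ αM/(n(1−α))` of `π(A)`, and
by the reverse triangle inequality the two discrepancies differ set by set, hence in the supremum,
by at most that much.
-/

open Finset

lemma measurable_iterFin {G : Type*} [MeasurableSpace G] {s : ℕ} {φ : G → Cube s → G}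
    (hφ : Measurable fun p : G × Cube s => φ p.1 p.2) (i : ℕ) (x : G) :
    Measurable (iterFin φ i x) := by
  induction i with
  | zero => exact measurable_const
  | succ n ih =>
    show Measurable fun v : Fin (n + 1) → Cube s =>
      φ (iterFin φ n x fun k => v k.castSucc) (v (Fin.last n))
    exact hφ.comp ((ih.comp (measurable_pi_lambda _ fun k => measurable_pi_apply k.castSucc)).prodMk
      (measurable_pi_apply (Fin.last n)))

lemma iterFin_succ_eq_comp_piFinSuccAbove {G : Type*} {s : ℕ} (φ : G → Cube s → G) (n : ℕ)
    (x : G) :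
    iterFin φ (n + 1) x = (fun p : Cube s × (Fin n → Cube s) => φ (iterFin φ n x p.2) p.1) ∘
      MeasurableEquiv.piFinSuccAbove (fun _ => Cube s) (Fin.last n) := by
  funext v
  simp only [iterFin, MeasurableEquiv.piFinSuccAbove, Fin.insertNthEquiv_last,
    MeasurableEquiv.coe_mk, Function.comp_apply, Fin.snocEquiv_symm_apply]
  rfl

theorem Kiter_eq_map_iterFin {G : Type*} [MeasurableSpace G] {s : ℕ} {K : G → Measure G}
    {φ : G → Cube s → G} (hKmeas : ∀ A : Set G, MeasurableSet A → Measurable fun x => K x A)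
    (hφ : Measurable fun p : G × Cube s => φ p.1 p.2)
    (hupdate : ∀ (x : G) (A : Set G), MeasurableSet A →
      K x A = volume {u : Cube s | φ x u ∈ A}) (i : ℕ) (x : G) :
    Kiter K i x = (volume : Measure (Fin i → Cube s)).map (iterFin φ i x) := by
  induction i with
  | zero => simp [Kiter, iterFin, Measure.map_const]
  | succ n ih =>
    ext A hA
    have hS : MeasurableSet
        ((fun p : Cube s × (Fin n → Cube s) => φ (iterFin φ n x p.2) p.1) ⁻¹' A) :=
      hφ.comp (((measurable_iterFin hφ n x).comp measurable_snd).prodMk measurable_fst) hA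
    rw [Kiter, Measure.bind_apply hA (Measure.measurable_of_measurable_coe K hKmeas).aemeasurable,
      ih, lintegral_map (hKmeas A hA) (measurable_iterFin hφ n x),
      Measure.map_apply (measurable_iterFin hφ _ x) hA, iterFin_succ_eq_comp_piFinSuccAbove,
      Set.preimage_comp,
      (volume_preserving_piFinSuccAbove _ _).measure_preimage hS.nullMeasurableSet,
      Measure.volume_eq_prod, Measure.prod_apply_symm hS]
    simp_rw [hupdate _ A hA]
    rfl

theorem volume_setOf_iterFin_mem {G : Type*} [MeasurableSpace G] {s : ℕ} {K : G → Measure G}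
    {φ : G → Cube s → G} (hKmeas : ∀ A : Set G, MeasurableSet A → Measurable fun x => K x A)
    (hφ : Measurable fun p : G × Cube s => φ p.1 p.2)
    (hupdate : ∀ (x : G) (A : Set G), MeasurableSet A →
      K x A = volume {u : Cube s | φ x u ∈ A}) (i : ℕ) (x : G) {A : Set G} (hA : MeasurableSet A) :
    volume {v : Fin i → Cube s | iterFin φ i x v ∈ A} = Kiter K i x A := by
  rw [Kiter_eq_map_iterFin hKmeas hφ hupdate, Measure.map_apply (measurable_iterFin hφ i x) hA]
  rfl

theorem abs_inv_mul_sum_sub_le_of_abs_sub_le_geometric {n : ℕ} (hn : 0 < n) {α M : ℝ}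
    (hα : 0 ≤ α) (hα1 : α < 1) (hM : 0 ≤ M) (p : ℕ → ℝ) (q : ℝ)
    (hp : ∀ j, 1 ≤ j → |p j - q| ≤ α ^ j * M) :
    |(n : ℝ)⁻¹ * ∑ i : Fin n, p (i + 1) - q| ≤ α * M / (n * (1 - α)) := by
  have hn' : (0 : ℝ) < n := by exact_mod_cast hn
  calc |(n : ℝ)⁻¹ * ∑ i : Fin n, p (i + 1) - q|
      = |(n : ℝ)⁻¹ * ∑ i ∈ range n, (p (i + 1) - q)| := by
        rw [sum_sub_distrib, sum_const, card_range, nsmul_eq_mul, mul_sub,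
          inv_mul_cancel_left₀ hn'.ne', Fin.sum_univ_eq_sum_range (fun i => p (i + 1))]
    _ = (n : ℝ)⁻¹ * |∑ i ∈ range n, (p (i + 1) - q)| := by
        rw [abs_mul, abs_of_pos (inv_pos.2 hn')]
    _ ≤ (n : ℝ)⁻¹ * ∑ i ∈ range n, α ^ (i + 1) * M := by
        gcongr
        exact (abs_sum_le_sum_abs _ _).trans (sum_le_sum fun i _ => hp _ (by omega))
    _ = (n : ℝ)⁻¹ * (M * ∑ i ∈ Ico 1 (n + 1), α ^ i) := by
        rw [sum_Ico_eq_sum_range, add_tsub_cancel_right, mul_sum _ _ M]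
        exact congrArg _ (sum_congr rfl fun i _ => by ring)
    _ ≤ (n : ℝ)⁻¹ * (M * (α ^ 1 / (1 - α))) := by
        gcongr
        exact geom_sum_Ico_le_of_lt_one hα hα1
    _ = α * M / (n * (1 - α)) := by field_simp

theorem abs_ciSup_sub_ciSup_le {ι : Sort*} {f g : ι → ℝ} (hf : BddAbove (Set.range f)) {c : ℝ}
    (hc : 0 ≤ c) (h : ∀ i, |f i - g i| ≤ c) : |(⨆ i, f i) - ⨆ i, g i| ≤ c := by
  rcases isEmpty_or_nonempty ι with hι | hι
  · simpa [Real.iSup_of_isEmpty] using hc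
  obtain ⟨b, hb⟩ := hf
  have hg : BddAbove (Set.range g) := ⟨b + c, Set.forall_mem_range.2 fun i => by
    linarith [hb (Set.mem_range_self i), (abs_sub_le_iff.1 (h i)).2]⟩
  refine abs_sub_le_iff.2 ⟨sub_le_iff_le_add'.2 (ciSup_le fun i => ?_),
    sub_le_iff_le_add'.2 (ciSup_le fun i => ?_)⟩
  · linarith [le_ciSup hg i, (abs_sub_le_iff.1 (h i)).1]
  · linarith [le_ciSup ⟨b, hb⟩ i, (abs_sub_le_iff.1 (h i)).2]

theorem inv_natCast_mul_sum_le_one {n : ℕ} {t : Fin n → ℝ} (ht : ∀ i, t i ≤ 1) :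
    (n : ℝ)⁻¹ * ∑ i, t i ≤ 1 :=
  inv_mul_le_one_of_le₀ (by simpa using sum_le_card_nsmul univ t 1 fun i _ => ht i) n.cast_nonneg

theorem discrepancy_sub_pushback_le_of_uniformlyErgodic_general {G : Type*} [MeasurableSpace G]
    {s : ℕ}
    (K : G → Measure G) (φ : G → Cube s → G) (π : Measure G) [IsProbabilityMeasure π]
    (hKmeas : ∀ A : Set G, MeasurableSet A → Measurable fun x => K x A)
    (hφ : Measurable fun p : G × Cube s => φ p.1 p.2)
    (hupdate : ∀ (x : G) (A : Set G), MeasurableSet A →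
      K x A = volume {u : Cube s | φ x u ∈ A})
    (α M : ℝ) (hα : 0 ≤ α) (hα1 : α < 1) (hM : 0 < M)
    (herg : ∀ (j : ℕ), 1 ≤ j → ∀ (y : G) (A : Set G), MeasurableSet A →
      |(Kiter K j y A).toReal - (π A).toReal| ≤ α ^ j * M)
    (𝒜 : Set (Set G)) (h𝒜 : ∀ A ∈ 𝒜, MeasurableSet A)
    (n : ℕ) (hn : 1 ≤ n) (x : G) (u : Fin n → Cube s) :
    (⨆ A : 𝒜, |(n : ℝ)⁻¹ * ∑ i : Fin n, (Kiter K (i.1 + 1) x (A : Set G)).toReal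
        - (π A).toReal|) ≤ α * M / (n * (1 - α)) ∧
    |(⨆ A : 𝒜, |(n : ℝ)⁻¹ * ∑ i : Fin n,
          (if iterFin φ (i.1 + 1) x (fun k => u (Fin.castLE i.isLt k)) ∈ (A : Set G)
            then (1 : ℝ) else 0) - (π A).toReal|)
      - (⨆ A : 𝒜, |(n : ℝ)⁻¹ * ∑ i : Fin n,
          ((if iterFin φ (i.1 + 1) x (fun k => u (Fin.castLE i.isLt k)) ∈ (A : Set G)
              then (1 : ℝ) else 0)
            - (volume {v : Fin (i.1 + 1) → Cube s | iterFin φ (i.1 + 1) x v ∈ (A : Set G)}).toReal)|)|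
    ≤ α * M / (n * (1 - α)) := by
  have hc : 0 ≤ α * M / (n * (1 - α)) := by
    have := sub_pos.2 hα1
    positivity
  have hmean : ∀ A, MeasurableSet A → |(n : ℝ)⁻¹ * ∑ i : Fin n, (Kiter K (i.1 + 1) x A).toReal
      - (π A).toReal| ≤ α * M / (n * (1 - α)) := fun A hA =>
    abs_inv_mul_sum_sub_le_of_abs_sub_le_geometric hn hα hα1 hM.le (fun j => (Kiter K j x A).toReal)
      _ fun j hj => herg j hj x A hA
  refine ⟨Real.iSup_le (fun A => hmean A (h𝒜 A A.2)) hc, abs_ciSup_sub_ciSup_le ?_ hc fun A => ?_⟩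
  · refine ⟨1, Set.forall_mem_range.2 fun A => abs_sub_le_of_nonneg_of_le (by positivity)
      (inv_natCast_mul_sum_le_one fun i => by split_ifs <;> norm_num) measureReal_nonneg
      measureReal_le_one⟩
  · simp only [sum_sub_distrib, mul_sub (n : ℝ)⁻¹,
      volume_setOf_iterFin_mem hKmeas hφ hupdate _ x (h𝒜 A A.2)]
    refine (abs_abs_sub_abs_le_abs_sub _ _).trans ?_
    rw [sub_sub_sub_cancel_left]
    exact hmean A (h𝒜 A A.2)

/-- Corollary: if `K` is uniformly ergodic with `(α, M)`, then
`sup_{A∈𝒜} |n⁻¹ Σ_{i=1}^n K^i(x,A) − π(A)| ≤ αM/(n(1−α))` and consequently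
`|D*_{𝒜,π}(P_n) − D*_{𝒜,φ}(U_n)| ≤ αM/(n(1−α))`. -/
theorem discrepancy_sub_pushback_le_of_uniformlyErgodic {G : Type*} [MeasurableSpace G]
    {s : ℕ}
    (K : G → Measure G) (φ : G → Cube s → G) (π : Measure G) [IsProbabilityMeasure π]
    (hprob : ∀ x, IsProbabilityMeasure (K x))
    (hKmeas : ∀ A : Set G, MeasurableSet A → Measurable fun x => K x A)
    (hφ : Measurable fun p : G × Cube s => φ p.1 p.2)
    (hstat : ∀ A : Set G, MeasurableSet A → ∫⁻ x, K x A ∂π = π A)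
    (hupdate : ∀ (x : G) (A : Set G), MeasurableSet A →
      K x A = volume {u : Cube s | φ x u ∈ A})
    (α M : ℝ) (hα : 0 ≤ α) (hα1 : α < 1) (hM : 0 < M)
    (herg : ∀ (j : ℕ), 1 ≤ j → ∀ (y : G) (A : Set G), MeasurableSet A →
      |(Kiter K j y A).toReal - (π A).toReal| ≤ α ^ j * M)
    (𝒜 : Set (Set G)) (h𝒜 : ∀ A ∈ 𝒜, MeasurableSet A)
    (n : ℕ) (hn : 1 ≤ n) (x : G) (u : Fin n → Cube s) :
    (⨆ A : 𝒜, |(n : ℝ)⁻¹ * ∑ i : Fin n, (Kiter K (i.1 + 1) x (A : Set G)).toReal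
        - (π A).toReal|) ≤ α * M / (n * (1 - α)) ∧
    |(⨆ A : 𝒜, |(n : ℝ)⁻¹ * ∑ i : Fin n,
          (if iterFin φ (i.1 + 1) x (fun k => u (Fin.castLE i.isLt k)) ∈ (A : Set G)
            then (1 : ℝ) else 0) - (π A).toReal|)
      - (⨆ A : 𝒜, |(n : ℝ)⁻¹ * ∑ i : Fin n,
          ((if iterFin φ (i.1 + 1) x (fun k => u (Fin.castLE i.isLt k)) ∈ (A : Set G)
              then (1 : ℝ) else 0)
            - (volume {v : Fin (i.1 + 1) → Cube s | iterFin φ (i.1 + 1) x v ∈ (A : Set G)}).toReal)|)|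
    ≤ α * M / (n * (1 - α)) :=
  discrepancy_sub_pushback_le_of_uniformlyErgodic_general K φ π hKmeas hφ hupdate α M hα hα1 hM herg
    𝒜 h𝒜 n hn x u
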